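/- arXiv:1908.11606 — 2 statements merged into one kernel-verified Lean document; each statement's English description precedes it below -/
import Mathlib

section
/- For w ∈ W^I ⊆ S_n and any reduced expression s_{i₁}s_{i₂}⋯s_{i_k} of w, the number #{m : i_m = j} of occurrences of the simple reflection s_j is independent of the chosen reduced expression. -/
open scoped Classical

noncomputable section

/-- The simple transposition `s_j` of `S_n` (0-indexed: it swaps positions `j` and `j+1`). -/
def sT (n j : ℕ) : Equiv.Perm (Fin n) :=
  if h : j + 1 < n then Equiv.swap ⟨j, Nat.lt_of_succ_lt h⟩ ⟨j + 1, h⟩ else 1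

/-- The Coxeter length of a permutation, as its number of inversions. -/
def invLen {n : ℕ} (w : Equiv.Perm (Fin n)) : ℕ :=
  (Finset.univ.filter fun p : Fin n × Fin n => p.1 < p.2 ∧ w p.2 < w p.1).card

/-- The parabolic subgroup `W_I ≅ S_i × S_{n-i}` generated by all simple transpositions
except the `i`-th one (1-indexed: we exclude `s_i`, i.e. the 0-indexed `sT n (i-1)`). -/
def WIsub (n i : ℕ) : Subgroup (Equiv.Perm (Fin n)) :=
  Subgroup.closure {g | ∃ m : ℕ, m + 1 < n ∧ m + 1 ≠ i ∧ g = sT n m}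

/-- `W^I`: the minimal length representatives of the cosets `w W_I`. -/
def minRep (n i : ℕ) : Set (Equiv.Perm (Fin n)) :=
  {w | ∀ m : ℕ, m + 1 < n → m + 1 ≠ i → invLen w < invLen (w * sT n m)}

/-- The path `λ^w = w · (↘,…,↘,↗,…,↗)` associated to `w`; `true` encodes `↘`,
`false` encodes `↗`; the symmetric group permutes positions. -/
def toPath {n : ℕ} (i : ℕ) (w : Equiv.Perm (Fin n)) : Fin n → Bool :=
  fun k => decide (((w⁻¹ k : Fin n) : ℕ) < i)

/-- `Λ_{n,i}`: the set of `n`-tuples of `↗`/`↘` with exactly `i` entries `↘`. -/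
def pathSet (n i : ℕ) : Set (Fin n → Bool) :=
  {lam | (Finset.univ.filter fun k => lam k = true).card = i}

/-- The height of the lattice path of `λ` at horizontal coordinate `j`
(the path starts at `(0,i)`; `↘` is a down-step, `↗` an up-step). -/
def hgt {n : ℕ} (i : ℕ) (lam : Fin n → Bool) (j : ℕ) : ℤ :=
  (i : ℤ) + ∑ k ∈ Finset.univ.filter (fun k : Fin n => (k : ℕ) < j),
      (if lam k then (-1 : ℤ) else 1)

/-- `λ ≤ μ`: the path `λ` lies weakly below the path `μ`. -/
def pathLE {n : ℕ} (i : ℕ) (lam mu : Fin n → Bool) : Prop :=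
  ∀ j ≤ n, hgt i lam j ≤ hgt i mu j

/-- Bruhat order on `S_n`: generated by `a < t·a` for transpositions `t`
with strictly increasing length. -/
def bruhatLE {n : ℕ} (u v : Equiv.Perm (Fin n)) : Prop :=
  Relation.ReflTransGen
    (fun a b => (∃ x y : Fin n, x ≠ y ∧ b = Equiv.swap x y * a) ∧ invLen a < invLen b) u v

/-- A Dyck strip of height `h`: the set of boxes (recorded by their centers) centered at the
integral points of a Dyck path from `(x₀,h)` to `(x₀+2l,h)` staying weakly below height `h`. -/
def IsDyckStrip (D : Finset (ℤ × ℤ)) (h : ℤ) : Prop :=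
  ∃ (x₀ : ℤ) (l : ℕ) (d : ℕ → ℤ),
    d 0 = 0 ∧ d (2 * l) = 0 ∧
    (∀ k < 2 * l, d (k + 1) = d k + 1 ∨ d (k + 1) = d k - 1) ∧
    (∀ k ≤ 2 * l, d k ≤ 0) ∧
    D = (Finset.range (2 * l + 1)).image fun k : ℕ => (x₀ + (k : ℤ), h + d k)

/-- The region `A(λ,μ)` between two paths `λ ≤ μ`, as the set of centers of the boxes
lying strictly between the two lattice paths. -/
def region {n : ℕ} (i : ℕ) (lam mu : Fin n → Bool) : Set (ℤ × ℤ) :=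
  {b | 0 ≤ b.1 ∧ b.1 ≤ (n : ℤ) ∧ Odd (b.1 + b.2 + (i : ℤ)) ∧
    hgt i lam b.1.toNat < b.2 ∧ b.2 < hgt i mu b.1.toNat}

/-- A Dyck partition of a region `A`: a partition of the boxes of `A` into Dyck strips. -/
def IsDyckPartition (P : Finset (Finset (ℤ × ℤ))) (A : Set (ℤ × ℤ)) : Prop :=
  (∀ D ∈ P, ∃ h, IsDyckStrip D h) ∧
  (∀ D ∈ P, ∀ D' ∈ P, D ≠ D' → Disjoint D D') ∧
  (⋃ D ∈ P, (D : Set (ℤ × ℤ))) = A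

/-- Type 1 condition: if some strip `D'` contains a box just above a box of `D`, then every box
just above a box of `D` is in `D'`. -/
def IsType1 (P : Finset (Finset (ℤ × ℤ))) : Prop :=
  ∀ D ∈ P, ∀ D' ∈ P, D ≠ D' → (∃ b ∈ D, (b.1, b.2 + 2) ∈ D') →
    ∀ b ∈ D, (b.1, b.2 + 2) ∈ D'

/-- The boxes just below, SW and SE of a box `b`. -/
def belowBoxes (b : ℤ × ℤ) : Finset (ℤ × ℤ) :=
  {(b.1, b.2 - 2), (b.1 - 1, b.2 - 1), (b.1 + 1, b.2 - 1)}

/-- Type 2 condition: if some strip `D'` contains a box just below, SW or SE of a box of `D`,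
then every box just below, SW or SE of a box of `D` belongs to `D` or `D'`. -/
def IsType2 (P : Finset (Finset (ℤ × ℤ))) : Prop :=
  ∀ D ∈ P, ∀ D' ∈ P, D ≠ D' → (∃ b ∈ D, ∃ c ∈ belowBoxes b, c ∈ D') →
    ∀ b ∈ D, ∀ c ∈ belowBoxes b, c ∈ D ∨ c ∈ D'

/-- `Conf¹(λ,μ)`: the set of type-1 Dyck partitions of the region `A(λ,μ)`. -/
def Conf1 {n : ℕ} (i : ℕ) (lam mu : Fin n → Bool) : Set (Finset (Finset (ℤ × ℤ))) :=
  {P | IsDyckPartition P (region i lam mu) ∧ IsType1 P}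

/-- `Conf²(λ,μ)`: the set of type-2 Dyck partitions of the region `A(λ,μ)`. -/
def Conf2 {n : ℕ} (i : ℕ) (lam mu : Fin n → Bool) : Set (Finset (Finset (ℤ × ℤ))) :=
  {P | IsDyckPartition P (region i lam mu) ∧ IsType2 P}

/-- The height of a Dyck strip (the largest `y`-coordinate of one of its boxes). -/
def stripHeight (D : Finset (ℤ × ℤ)) : ℤ := WithBot.unbotD 0 ((D.image Prod.snd).max)

/-- Two Dyck strips are distant if no box of one is just above or just below a box of the other. -/
def Distant (D C : Finset (ℤ × ℤ)) : Prop :=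
  ∀ b ∈ D, (b.1, b.2 + 2) ∉ C ∧ (b.1, b.2 - 2) ∉ C

/-- The order relation `P ≻ Q` on Dyck partitions. -/
def DPsucc (P Q : Finset (Finset (ℤ × ℤ))) : Prop :=
  ∃ h : ℤ, 0 < h ∧
    (∀ j : ℤ, h < j →
      P.filter (fun D => stripHeight D = j) = Q.filter (fun D => stripHeight D = j)) ∧
    P.filter (fun D => stripHeight D = h) ≠ Q.filter (fun D => stripHeight D = h) ∧
    (∀ D ∈ P.filter (fun D => stripHeight D = h),
      ∃ D' ∈ Q.filter (fun D => stripHeight D = h), D ⊆ D')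


/-! A permutation with at most one descent is 321-avoiding, since a pattern `c b a` needs a
descent between the positions of `c` and `b` and another one between those of `b` and `a`.
Read a reduced word `s_{m₁} ⋯ s_{m_k}` letter by letter: every prefix product is again
321-avoiding, and appending `s_m` turns an ascent at `m` into a descent. For a 321-avoiding
permutation a descent at `m` straddles the cut between `m` and `m + 1` (`w (m+1) ≤ m < w m`), so
each letter `s_m` increases by one the number `#{x ≤ m | m < w x}` of values carried across
that cut and leaves the other cuts untouched. Hence `s_j` occurs exactly `#{x ≤ j | j < w x}`
times in every reduced word of `w`. -/

open Equiv Finset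

section

variable {n : ℕ}

theorem sT_eq_swap {a b : Fin n} (hab : (b : ℕ) = a + 1) : sT n a = swap a b := by
  rw [sT, dif_pos (hab ▸ b.isLt)]
  congr 1; ext; simp [hab]

theorem swap_lt_swap_iff_of_adjacent {a b x y : Fin n} (hab : (b : ℕ) = a + 1)
    (hyx : (x, y) ≠ (b, a)) : swap a b x < swap a b y ↔ (x, y) ≠ (a, b) ∧ x < y := by
  simp only [swap_apply_def, ne_eq, Prod.mk.injEq, Fin.lt_def, Fin.ext_iff] at *
  split_ifs <;> omega

theorem invLen_one : invLen (1 : Perm (Fin n)) = 0 := by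
  rw [invLen, card_eq_zero, filter_eq_empty_iff]
  rintro ⟨a, b⟩ - ⟨hab, hba⟩
  exact lt_asymm hab hba

theorem invLen_mul_swap_of_lt {v : Perm (Fin n)} {a b : Fin n} (hab : (b : ℕ) = a + 1)
    (h : v a < v b) : invLen (v * swap a b) = invLen v + 1 := by
  rw [invLen, invLen, ← card_erase_add_one (a := (a, b))]
  swap
  · rw [mem_filter]
    simp [h, Fin.lt_def, hab]
  congr 1
  refine card_equiv ((swap a b).prodCongr (swap a b)) fun p => ?_
  by_cases hp : p = (b, a)
  · subst hp
    rw [mem_erase, mem_filter, mem_filter]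
    simp [lt_asymm h]
  · rw [mem_erase, mem_filter, mem_filter, prodCongr_apply, Prod.map_fst, Prod.map_snd,
      swap_lt_swap_iff_of_adjacent hab hp]
    simp only [Perm.coe_mul, Function.comp_apply, mem_univ, true_and]
    tauto

theorem invLen_mul_swap_of_gt {v : Perm (Fin n)} {a b : Fin n} (hab : (b : ℕ) = a + 1)
    (h : v b < v a) : invLen (v * swap a b) + 1 = invLen v := by
  simpa [mul_assoc] using (invLen_mul_swap_of_lt (v := v * swap a b) hab (by simpa using h)).symm

theorem lt_of_invLen_lt_invLen_mul_swap {v : Perm (Fin n)} {a b : Fin n} (hab : (b : ℕ) = a + 1)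
    (h : invLen v < invLen (v * swap a b)) : v a < v b := by
  refine lt_of_le_of_ne (not_lt.1 fun hba => ?_) (v.injective.ne (Fin.ne_of_val_ne (by omega)))
  have := invLen_mul_swap_of_gt hab hba
  omega

theorem invLen_mul_sT_le (v : Perm (Fin n)) (m : ℕ) : invLen (v * sT n m) ≤ invLen v + 1 := by
  by_cases hm : m + 1 < n
  · obtain ⟨a, b, hab, rfl⟩ : ∃ a b : Fin n, (b : ℕ) = a + 1 ∧ (a : ℕ) = m :=
      ⟨⟨m, by omega⟩, ⟨m + 1, hm⟩, rfl, rfl⟩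
    rw [sT_eq_swap hab]
    rcases lt_or_gt_of_ne (v.injective.ne (Fin.ne_of_val_ne (by omega : (a : ℕ) ≠ b))) with h | h
    · rw [invLen_mul_swap_of_lt hab h]
    · have := invLen_mul_swap_of_gt hab h; omega
  · simp [sT, hm]

theorem invLen_prod_le (ω : List ℕ) : invLen (ω.map (sT n)).prod ≤ ω.length := by
  induction ω using List.reverseRecOn with
  | nil => simp [invLen_one]
  | append_singleton ω m ih =>
    simpa using (invLen_mul_sT_le _ m).trans (Nat.add_le_add_right ih 1)

theorem exists_descent_of_lt (w : Perm (Fin n)) {x y : Fin n} (hxy : x < y) (h : w y < w x) :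
    ∃ a b : Fin n, (b : ℕ) = a + 1 ∧ x ≤ a ∧ b ≤ y ∧ w b < w a := by
  by_contra! hasc
  refine (strictMonoOn_of_lt_succ Set.ordConnected_Icc fun a ha hxa hay => ?_)
    ⟨le_refl x, hxy.le⟩ ⟨hxy.le, le_refl y⟩ hxy |>.not_gt h
  have hcov : (a : ℕ) ⋖ (Order.succ a : Fin n) := Fin.covBy_iff.1 (Order.covBy_succ_of_not_isMax ha)
  refine lt_of_le_of_ne (hasc a _ (Nat.covBy_iff_add_one_eq.1 hcov).symm hxa.1 hay.2) ?_
  exact w.injective.ne (Fin.ne_of_val_ne hcov.lt.ne)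

def Avoids321 (w : Perm (Fin n)) : Prop :=
  ∀ ⦃a b c : Fin n⦄, a < b → b < c → ¬(w c < w b ∧ w b < w a)

theorem avoids321_of_mem_minRep {i : ℕ} {w : Perm (Fin n)} (hw : w ∈ minRep n i) : Avoids321 w := by
  have hasc : ∀ a b : Fin n, (b : ℕ) = a + 1 → w b < w a → (b : ℕ) = i := by
    intro a b hab hdesc
    by_contra hbi
    have hlen := hw a (hab ▸ b.isLt) (hab ▸ hbi)
    rw [sT_eq_swap hab] at hlen
    exact lt_asymm (lt_of_invLen_lt_invLen_mul_swap hab hlen) hdesc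
  rintro a b c hab hbc ⟨hcb, hba⟩
  obtain ⟨a₁, b₁, h₁, -, hb₁, hd₁⟩ := exists_descent_of_lt w hab hba
  obtain ⟨a₂, b₂, h₂, ha₂, -, hd₂⟩ := exists_descent_of_lt w hbc hcb
  have := hasc a₁ b₁ h₁ hd₁
  have := hasc a₂ b₂ h₂ hd₂
  rw [Fin.le_def] at hb₁ ha₂
  omega

theorem exists_lt_le_apply (σ : Perm (Fin n)) {k l : ℕ} (hkl : k < l) (hl : l ≤ n) :
    ∃ x : Fin n, (x : ℕ) < l ∧ k ≤ σ x := by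
  by_contra! h
  have hmaps : Set.MapsTo σ (univ.filter fun x : Fin n => (x : ℕ) < l)
      (univ.filter fun y : Fin n => (y : ℕ) < k) := fun x hx => by
    simp only [coe_filter, mem_univ, true_and, Set.mem_ofPred_eq] at hx ⊢
    exact h x hx
  have := card_le_card_of_injOn σ hmaps σ.injective.injOn
  simp only [Fin.card_filter_val_lt] at this
  omega

theorem Avoids321.bounds_of_descent {w : Perm (Fin n)} (hw : Avoids321 w) {a b : Fin n}
    (hab : (b : ℕ) = a + 1) (hdesc : w b < w a) : (w b : ℕ) ≤ a ∧ (a : ℕ) < w a := by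
  rw [Fin.lt_def] at hdesc
  constructor
  · by_contra! hb
    obtain ⟨y, hy, hc⟩ := exists_lt_le_apply w⁻¹ (Nat.lt_succ_self a) (by omega)
    set c := w⁻¹ y
    have hwc : w c = y := w.apply_symm_apply y
    have hac : (c : ℕ) ≠ a := fun h => by rw [Fin.ext h] at hwc; omega
    have hbc : (c : ℕ) ≠ b := fun h => by rw [Fin.ext h] at hwc; omega
    refine hw (c := c) ?_ ?_ ⟨?_, hdesc⟩ <;> simp only [Fin.lt_def, hwc] <;> omega
  · by_contra! ha
    obtain ⟨x, hx, hc⟩ := exists_lt_le_apply w (Nat.lt_succ_self (a + 1)) (by omega)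
    have hax : (x : ℕ) ≠ a := fun h => by rw [Fin.ext h] at hc; omega
    have hbx : (x : ℕ) ≠ b := fun h => by rw [Fin.ext h] at hc; omega
    refine hw (a := x) ?_ ?_ ⟨hdesc, ?_⟩ <;> simp only [Fin.lt_def] <;> omega

theorem Avoids321.mul_swap_of_descent {w : Perm (Fin n)} (hw : Avoids321 w) {a b : Fin n}
    (hab : (b : ℕ) = a + 1) (hdesc : w b < w a) : Avoids321 (w * swap a b) := by
  have hlt : ∀ x y : Fin n, x < y → w (swap a b y) < w (swap a b x) →
      swap a b x < swap a b y := by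
    intro x y hxy hxy'
    refine (swap_lt_swap_iff_of_adjacent hab ?_).2 ⟨?_, hxy⟩ <;> rw [ne_eq, Prod.mk.injEq]
    · rintro ⟨rfl, rfl⟩
      rw [Fin.lt_def] at hxy
      omega
    · rintro ⟨rfl, rfl⟩
      rw [swap_apply_left, swap_apply_right] at hxy'
      exact lt_asymm hxy' hdesc
  rintro x y z hxy hyz ⟨hzy, hyx⟩
  exact hw (hlt x y hxy hyx) (hlt y z hyz hzy) ⟨hzy, hyx⟩

def crossings (w : Perm (Fin n)) (j : ℕ) : ℕ :=
  #{x : Fin n | (x : ℕ) ≤ j ∧ j < w x}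

theorem crossings_one (j : ℕ) : crossings (1 : Perm (Fin n)) j = 0 := by
  rw [crossings, card_eq_zero, filter_eq_empty_iff]
  rintro x - ⟨hxj, hjx⟩
  exact (lt_of_lt_of_le hjx hxj).false

theorem crossings_mul_swap_of_ne {v : Perm (Fin n)} {a b : Fin n} (hab : (b : ℕ) = a + 1)
    {j : ℕ} (hj : (a : ℕ) ≠ j) : crossings (v * swap a b) j = crossings v j := by
  refine card_equiv (swap a b) fun x => ?_
  have hx : ((swap a b x : Fin n) : ℕ) ≤ j ↔ (x : ℕ) ≤ j := by
    rw [swap_apply_def]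
    split_ifs <;> subst_vars <;> omega
  rw [mem_filter, mem_filter, Perm.mul_apply, hx]
  simp only [mem_univ, true_and]

theorem crossings_mul_swap_self {v : Perm (Fin n)} {a b : Fin n} (hab : (b : ℕ) = a + 1)
    (hva : (v a : ℕ) ≤ a) (hvb : (a : ℕ) < v b) :
    crossings (v * swap a b) a = crossings v a + 1 := by
  rw [crossings, crossings, ← card_insert_of_notMem (a := a) (by simpa using hva)]
  congr 1
  ext x
  rw [mem_insert, mem_filter, mem_filter, Perm.mul_apply, swap_apply_def]
  split_ifs with hxa hxb
  · subst hxa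
    simp [hvb]
  · subst hxb
    simp only [Fin.ext_iff]
    omega
  · simp [hxa]

theorem count_eq_crossings (ω : List ℕ) {w : Perm (Fin n)} (hω : (ω.map (sT n)).prod = w)
    (hred : ω.length = invLen w) (hav : Avoids321 w) (j : ℕ) : ω.count j = crossings w j := by
  induction ω using List.reverseRecOn generalizing w with
  | nil => simp [← hω, crossings_one]
  | append_singleton ω m ih =>
    simp only [List.map_append, List.map_singleton, List.prod_append, List.prod_singleton,
      List.length_append, List.length_singleton] at hω hred
    subst hω
    have hv := invLen_prod_le (n := n) ω
    generalize (ω.map (sT n)).prod = v at ih hv hred hav ⊢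
    have hvm := invLen_mul_sT_le v m
    have hm : m + 1 < n := by
      by_contra hm
      simp only [sT, hm, dite_false, mul_one] at hred
      omega
    obtain ⟨a, b, hab, rfl⟩ : ∃ a b : Fin n, (b : ℕ) = a + 1 ∧ (a : ℕ) = m :=
      ⟨⟨m, by omega⟩, ⟨m + 1, hm⟩, rfl, rfl⟩
    rw [sT_eq_swap hab] at hred hav hvm ⊢
    have hasc : v a < v b := lt_of_invLen_lt_invLen_mul_swap hab (by omega)
    have hdesc : (v * swap a b) b < (v * swap a b) a := by simpa using hasc
    have hav' : Avoids321 v := by simpa [mul_assoc] using hav.mul_swap_of_descent hab hdesc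
    rw [List.count_append, List.count_singleton, ih rfl (by omega) hav']
    by_cases hj : (a : ℕ) = j
    · subst hj
      obtain ⟨hvb, hva⟩ := hav.bounds_of_descent hab hdesc
      simp only [Perm.mul_apply, swap_apply_left, swap_apply_right] at hva hvb
      simp [crossings_mul_swap_self hab hvb hva]
    · simp [crossings_mul_swap_of_ne hab hj, hj]

end

theorem rex_count_welldefined_general (n i : ℕ)
    (w : Equiv.Perm (Fin n)) (hw : w ∈ minRep n i)
    (ω₁ ω₂ : List ℕ)
    (h₁p : (ω₁.map (sT n)).prod = w) (h₂p : (ω₂.map (sT n)).prod = w)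
    (h₁l : ω₁.length = invLen w) (h₂l : ω₂.length = invLen w) :
    ∀ j : ℕ, ω₁.count j = ω₂.count j := by
  intro j
  have hav := avoids321_of_mem_minRep hw
  rw [count_eq_crossings ω₁ h₁p h₁l hav, count_eq_crossings ω₂ h₂p h₂l hav]

/-- for `w ∈ W^I`, the number of occurrences of each simple reflection in a
reduced expression of `w` is independent of the chosen reduced expression. -/
theorem rex_count_welldefined (n i : ℕ) (hi1 : 1 ≤ i) (hi2 : i < n)
    (w : Equiv.Perm (Fin n)) (hw : w ∈ minRep n i)
    (ω₁ ω₂ : List ℕ)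
    (h₁v : ∀ m ∈ ω₁, m + 1 < n) (h₂v : ∀ m ∈ ω₂, m + 1 < n)
    (h₁p : (ω₁.map (sT n)).prod = w) (h₂p : (ω₂.map (sT n)).prod = w)
    (h₁l : ω₁.length = invLen w) (h₂l : ω₂.length = invLen w) :
    ∀ j : ℕ, ω₁.count j = ω₂.count j :=
  rex_count_welldefined_general n i w hw ω₁ ω₂ h₁p h₂p h₁l h₂l
end
end

section
/- Let w ∈ W^I ⊆ S_n have a valley at j, with λ^w_a = ⋯ = λ^w_j = ↘ and λ^w_{j+1} = ⋯ = λ^w_b = ↗ (so a ≤ j < b are maximal such runs). If v ∈ W^I with v < w, then for every x in the parabolic subgroup W_{[a,b−1]} generated by {s_a, …, s_{b−1}} one has x·v ≱ w in Bruhat order. -/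
open scoped Classical

noncomputable section

/-!
Write `downCount λ c` for the number of `↘` among the first `c` steps of a path; it encodes the
height profile of the path. A Bruhat step `a < t·a` can only move a `↘` of `λ^a` to a later
position, so `v ≤ w` gives `downCount λ^w ≤ downCount λ^v` pointwise; and a minimal coset
representative, being increasing on `[0, i)` and on `[i, n)`, is determined by its path.

Suppose `w ≤ w'` with `w' W_I = x v W_I`. Then `λ^{w'} = λ^v ∘ x⁻¹`, and `x` only permutes the
positions in `[a, b]`, so the down-counts of `w'` and `v` agree at every `c ∉ (a, b]`; squeezed in
between, so do those of `w`. On `[a, b + 1]` the path `λ^w` first descends as fast as possible and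
then climbs, so it is the lowest path with these endpoints; lying weakly above `λ^v`, it
coincides with it there. Hence `λ^w = λ^v`, so `w = v`, a contradiction.
-/

open Finset Equiv

theorem StrictMonoOn.eqOn_of_image_eq {α β : Type*} [LinearOrder α] [WellFoundedLT α] [Preorder β]
    {f g : α → β} {s : Set α} (hf : StrictMonoOn f s) (hg : StrictMonoOn g s)
    (h : f '' s = g '' s) : s.EqOn f g := by
  rw [Set.strictMonoOn_iff_strictMono] at hf hg
  have hfg := (hf.range_inj hg).1 (by simpa only [← Set.image_eq_range] using h)
  exact fun x hx => congrFun hfg ⟨x, hx⟩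

section Inversions

variable {n : ℕ}

def inversions (u : Perm (Fin n)) : Finset (Fin n × Fin n) :=
  univ.filter fun z => z.1 < z.2 ∧ u z.2 < u z.1

theorem invLen_lt_invLen_mul_swap {u : Perm (Fin n)} {p q : Fin n} (hpq : p < q)
    (hu : u p < u q) : invLen u < invLen (u * swap p q) := by
  let s := swap p q
  -- A pair that `s` keeps in order is moved by `s`; a pair that `s` flips stays put.
  let ψ : Fin n × Fin n → Fin n × Fin n := fun z => if s z.1 < s z.2 then (s z.1, s z.2) else z
  have hmaps : Set.MapsTo ψ (inversions u) ((inversions (u * s)).erase (p, q)) := by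
    rintro ⟨k, l⟩ h
    simp only [inversions, mem_coe, mem_filter, mem_erase, mem_univ, true_and, ψ, s,
      Perm.mul_apply] at h ⊢
    split_ifs <;> grind
  have hinj : Set.InjOn ψ (inversions u) := by
    rintro ⟨k, l⟩ h ⟨k', l'⟩ h' hψ
    simp only [inversions, mem_coe, mem_filter, mem_univ, true_and, ψ, s] at h h' hψ
    split_ifs at hψ <;> simp only [Prod.mk.injEq, EmbeddingLike.apply_eq_iff_eq] at hψ ⊢ <;> grind
  have hpq_mem : (p, q) ∈ inversions (u * s) := by
    rw [inversions, mem_filter]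
    simpa [s] using ⟨hpq, hu⟩
  calc invLen u ≤ #((inversions (u * s)).erase (p, q)) := card_le_card_of_injOn ψ hmaps hinj
    _ < invLen (u * s) := card_erase_lt_of_mem hpq_mem

theorem invLen_le_invLen_inv (u : Perm (Fin n)) : invLen u ≤ invLen u⁻¹ := by
  refine card_le_card_of_injOn (fun z => (u z.2, u z.1)) ?_ ?_
  · rintro ⟨k, l⟩ h
    simp only [mem_coe, mem_filter, mem_univ, true_and] at h ⊢
    simpa using h.symm
  · rintro ⟨k, l⟩ - ⟨k', l'⟩ - h
    simp_all

theorem invLen_inv (u : Perm (Fin n)) : invLen u⁻¹ = invLen u :=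
  le_antisymm (by simpa using invLen_le_invLen_inv u⁻¹) (invLen_le_invLen_inv u)

theorem inv_apply_lt_inv_apply_of_invLen_lt {a : Perm (Fin n)} {p q : Fin n} (hpq : p < q)
    (h : invLen a < invLen (swap p q * a)) : a⁻¹ p < a⁻¹ q := by
  by_contra! hle
  have hlt : a⁻¹ q < a⁻¹ p := hle.lt_of_ne (by simpa using hpq.ne')
  have := invLen_lt_invLen_mul_swap (u := (swap p q * a)⁻¹) hpq (by simpa using hlt)
  rw [invLen_inv, mul_inv_rev, swap_inv, mul_assoc, swap_mul_self, mul_one, invLen_inv] at this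
  exact lt_asymm h this

end Inversions

section MinRep

variable {n i : ℕ} {w : Perm (Fin n)}

theorem apply_lt_apply_succ_of_mem_minRep (hw : w ∈ minRep n i) {m : ℕ} (hm : m + 1 < n)
    (hmi : m + 1 ≠ i) : w ⟨m, by omega⟩ < w ⟨m + 1, hm⟩ := by
  set p : Fin n := ⟨m, by omega⟩
  set q : Fin n := ⟨m + 1, hm⟩
  have hs : sT n m = swap p q := dif_pos hm
  have hmin : invLen w < invLen (w * swap p q) := hs ▸ hw m hm hmi
  by_contra! hle
  have hlt := hle.lt_of_ne (w.injective.ne (by simp [p, q, Fin.ext_iff]))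
  have := invLen_lt_invLen_mul_swap (u := w * swap p q) (p := p) (q := q)
    (Fin.mk_lt_mk.2 m.lt_succ_self) (by simpa using hlt)
  rw [mul_assoc, swap_mul_self, mul_one] at this
  exact lt_asymm hmin this

theorem apply_lt_apply_of_mem_minRep (hw : w ∈ minRep n i) {k l : Fin n} (hkl : k < l)
    (hblock : ¬((k : ℕ) < i ∧ i ≤ l)) : w k < w l := by
  obtain ⟨k, hk⟩ := k
  obtain ⟨l, hl⟩ := l
  simp only [Fin.mk_lt_mk] at hkl hblock
  induction l, hkl using Nat.le_induction with
  | base => exact apply_lt_apply_succ_of_mem_minRep hw hl (by omega)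
  | succ l hkl ih =>
    exact (ih (by omega) (by omega)).trans (apply_lt_apply_succ_of_mem_minRep hw hl (by omega))

theorem image_setOf_val_lt (w : Perm (Fin n)) :
    w '' {k | (k : ℕ) < i} = {l | toPath i w l = true} := by
  ext l
  simp [Equiv.image_eq_preimage_symm, toPath]

theorem image_setOf_le_val (w : Perm (Fin n)) :
    w '' {k | i ≤ (k : ℕ)} = {l | toPath i w l = false} := by
  ext l
  simp [Equiv.image_eq_preimage_symm, toPath]

theorem eq_of_toPath_eq {v : Perm (Fin n)} (hv : v ∈ minRep n i) (hw : w ∈ minRep n i)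
    (h : toPath i v = toPath i w) : v = w := by
  ext k : 1
  rcases lt_or_ge (k : ℕ) i with hk | hk
  · have mono : ∀ {u}, u ∈ minRep n i → StrictMonoOn u {k : Fin n | (k : ℕ) < i} :=
      fun hu _ _ _ hl hkl => apply_lt_apply_of_mem_minRep hu hkl (by simp_all)
    refine (mono hv).eqOn_of_image_eq (mono hw) ?_ hk
    rw [image_setOf_val_lt, image_setOf_val_lt, h]
  · have mono : ∀ {u}, u ∈ minRep n i → StrictMonoOn u {k : Fin n | i ≤ (k : ℕ)} :=
      fun hu _ hk _ _ hkl => apply_lt_apply_of_mem_minRep hu hkl (by simp_all)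
    refine (mono hv).eqOn_of_image_eq (mono hw) ?_ hk
    rw [image_setOf_le_val, image_setOf_le_val, h]

end MinRep

section DownCount

variable {n : ℕ}

/-- For `c ≤ n`, `hgt i lam c = i + c - 2 * downCount lam c`: comparing down-counts compares
heights, in reverse. -/
def downCount (lam : Fin n → Bool) (c : ℕ) : ℕ :=
  ∑ k : Fin n, if (k : ℕ) < c then (lam k).toNat else 0

theorem downCount_succ (lam : Fin n → Bool) {c : ℕ} (hc : c < n) :
    downCount lam (c + 1) = downCount lam c + (lam ⟨c, hc⟩).toNat := by
  have hsplit : ∀ k : Fin n, (if (k : ℕ) < c + 1 then (lam k).toNat else 0) =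
      (if (k : ℕ) < c then (lam k).toNat else 0) + if k = ⟨c, hc⟩ then (lam k).toNat else 0 := by
    intro k
    rcases lt_trichotomy (k : ℕ) c with h | h | h
    · simp [h, h.le.trans_lt c.lt_succ_self, Fin.ext_iff, h.ne]
    · simp [h, Fin.ext_iff]
    · simp [h.not_gt, Fin.ext_iff, h.ne', Nat.not_lt.2 h]
  simp only [downCount, hsplit, sum_add_distrib, sum_ite_eq', mem_univ, if_true]

theorem downCount_mono (lam : Fin n → Bool) : Monotone (downCount lam) := fun c c' hcc' =>
  sum_le_sum fun k _ => by split_ifs <;> omega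

theorem downCount_le_add (lam : Fin n → Bool) {a c : ℕ} (hac : a ≤ c) (hcn : c ≤ n) :
    downCount lam c ≤ downCount lam a + (c - a) := by
  induction c, hac using Nat.le_induction with
  | base => simp
  | succ c hac ih =>
    rw [downCount_succ lam (by omega)]
    have := ih (by omega)
    have := Bool.toNat_le (lam ⟨c, by omega⟩)
    omega

theorem downCount_eq_add_of_forall_true {lam : Fin n → Bool} {a c : ℕ} (hac : a ≤ c)
    (hcn : c ≤ n) (h : ∀ k (hk : k < n), a ≤ k → k < c → lam ⟨k, hk⟩ = true) :
    downCount lam c = downCount lam a + (c - a) := by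
  induction c, hac using Nat.le_induction with
  | base => simp
  | succ c hac ih =>
    rw [downCount_succ lam (by omega), ih (by omega) fun k hk h1 h2 => h k hk h1 (by omega),
      h c (by omega) hac c.lt_succ_self]
    simp only [Bool.toNat_true]
    omega

theorem downCount_eq_of_forall_false {lam : Fin n → Bool} {a c : ℕ} (hac : a ≤ c)
    (hcn : c ≤ n) (h : ∀ k (hk : k < n), a ≤ k → k < c → lam ⟨k, hk⟩ = false) :
    downCount lam c = downCount lam a := by
  induction c, hac using Nat.le_induction with
  | base => rfl
  | succ c hac ih =>
    rw [downCount_succ lam (by omega), ih (by omega) fun k hk h1 h2 => h k hk h1 (by omega),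
      h c (by omega) hac c.lt_succ_self, Bool.toNat_false, add_zero]

theorem eq_of_downCount_eq {lam mu : Fin n → Bool} (h : ∀ c, downCount lam c = downCount mu c) :
    lam = mu := by
  funext k
  have hk := downCount_succ lam k.isLt
  rw [h, h, downCount_succ mu k.isLt, add_right_inj] at hk
  revert hk
  cases lam k <;> cases mu k <;> simp

theorem downCount_comp_perm (lam : Fin n → Bool) (σ : Perm (Fin n)) (c : ℕ) :
    downCount (lam ∘ σ) c =
      ∑ k : Fin n, if ((σ⁻¹ k : Fin n) : ℕ) < c then (lam k).toNat else 0 := by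
  conv_rhs => rw [← Equiv.sum_comp σ]
  simp [downCount]

theorem downCount_comp_swap_le {lam : Fin n → Bool} {p q : Fin n} (hpq : p < q)
    (h : lam q = true → lam p = true) (c : ℕ) :
    downCount (lam ∘ swap p q) c ≤ downCount lam c := by
  by_cases hpq' : lam p = lam q
  · refine le_of_eq (congrArg (downCount · c) (funext fun k => ?_))
    simp only [Function.comp_apply, swap_apply_def]
    split_ifs <;> simp_all
  have hq : lam q = false := by
    cases hlq : lam q <;> simp_all
  -- only the `↘` at `p` moves, and it moves to the later position `q`
  have hmove : ∀ k, lam k = true → ((swap p q k : Fin n) : ℕ) < c → (k : ℕ) < c := by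
    intro k hk
    rw [swap_apply_def]
    split_ifs with hkp hkq
    · exact fun hqc => hkp ▸ (Fin.lt_def.1 hpq).trans hqc
    · exact absurd (hkq ▸ hk) (by simp [hq])
    · exact id
  rw [downCount_comp_perm, swap_inv]
  refine sum_le_sum fun k _ => ?_
  cases hk : lam k
  · simp
  · have := hmove k hk
    split_ifs <;> simp_all

theorem downCount_eq_of_valley {lam mu : Fin n → Bool} {a j b : ℕ} (hbn : b < n)
    (hdown : ∀ k (hk : k < n), a ≤ k → k ≤ j → lam ⟨k, hk⟩ = true)
    (hup : ∀ k (hk : k < n), j + 1 ≤ k → k ≤ b → lam ⟨k, hk⟩ = false)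
    (hle : ∀ c, downCount lam c ≤ downCount mu c)
    (ha : downCount lam a = downCount mu a) (hb : downCount lam (b + 1) = downCount mu (b + 1))
    {c : ℕ} (hac : a ≤ c) (hcb : c ≤ b + 1) : downCount lam c = downCount mu c := by
  refine le_antisymm (hle c) ?_
  rcases le_or_gt c (j + 1) with hcj | hjc
  · calc downCount mu c ≤ downCount mu a + (c - a) := downCount_le_add mu hac (by omega)
      _ = downCount lam c := by
        rw [← ha, downCount_eq_add_of_forall_true hac (by omega)
          fun k hk h₁ h₂ => hdown k hk h₁ (by omega)]
  · calc downCount mu c ≤ downCount mu (b + 1) := downCount_mono mu hcb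
      _ = downCount lam c := by
        rw [← hb, downCount_eq_of_forall_false hcb (by omega)
          fun k hk h₁ h₂ => hup k hk (by omega) (by omega)]

end DownCount

/-- The Young subgroup `S_c × S_{n-c}` (all of `S_n` when `n ≤ c`). -/
def segmentStabilizer (n c : ℕ) : Subgroup (Perm (Fin n)) where
  carrier := {σ | ∀ k, ((σ k : Fin n) : ℕ) < c ↔ (k : ℕ) < c}
  mul_mem' hσ hτ k := (hσ _).trans (hτ k)
  one_mem' _ := Iff.rfl
  inv_mem' {σ} hσ k := by simpa using (hσ (σ⁻¹ k)).symm

section SegmentStabilizer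

variable {n : ℕ}

theorem sT_mem_segmentStabilizer {m c : ℕ} (h : m + 1 ≠ c) : sT n m ∈ segmentStabilizer n c := by
  unfold sT
  split_ifs with hm
  · intro k
    rw [swap_apply_def]
    split_ifs <;> simp_all only [Fin.ext_iff] <;> omega
  · exact one_mem _

theorem closure_le_segmentStabilizer {c : ℕ} {S : Set (Perm (Fin n))}
    (hS : ∀ g ∈ S, ∃ m, m + 1 ≠ c ∧ g = sT n m) : Subgroup.closure S ≤ segmentStabilizer n c :=
  (Subgroup.closure_le _).2 fun g hg => by
    obtain ⟨m, hm, rfl⟩ := hS g hg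
    exact sT_mem_segmentStabilizer hm

theorem WIsub_le_segmentStabilizer (i : ℕ) : WIsub n i ≤ segmentStabilizer n i :=
  closure_le_segmentStabilizer fun _ ⟨m, _, hmi, hg⟩ => ⟨m, hmi, hg⟩

theorem closure_interval_le_segmentStabilizer {a b c : ℕ} (hc : c ≤ a ∨ b < c) :
    Subgroup.closure {g | ∃ m : ℕ, a ≤ m ∧ m < b ∧ g = sT n m} ≤ segmentStabilizer n c :=
  closure_le_segmentStabilizer fun _ ⟨m, ham, hmb, hg⟩ => ⟨m, by omega, hg⟩

theorem toPath_mul_left (i : ℕ) (σ a : Perm (Fin n)) : toPath i (σ * a) = toPath i a ∘ ⇑σ⁻¹ := by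
  funext k
  simp [toPath, mul_inv_rev]

theorem toPath_mul_of_mem_segmentStabilizer {i : ℕ} {u : Perm (Fin n)}
    (hu : u ∈ segmentStabilizer n i) (w : Perm (Fin n)) : toPath i (w * u) = toPath i w := by
  funext k
  simp only [toPath, mul_inv_rev, Perm.mul_apply, (inv_mem hu) (w⁻¹ k)]

theorem downCount_comp_of_mem_segmentStabilizer {c : ℕ} {σ : Perm (Fin n)}
    (hσ : σ ∈ segmentStabilizer n c) (lam : Fin n → Bool) :
    downCount (lam ∘ σ) c = downCount lam c := by
  have hσ' : ∀ k, ((σ⁻¹ k : Fin n) : ℕ) < c ↔ (k : ℕ) < c := inv_mem hσ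
  rw [downCount_comp_perm]
  simp only [hσ', downCount]

end SegmentStabilizer

section Bruhat

variable {n i : ℕ}

theorem downCount_toPath_le_of_bruhat_step {a b : Perm (Fin n)}
    (hab : (∃ x y : Fin n, x ≠ y ∧ b = swap x y * a) ∧ invLen a < invLen b) (c : ℕ) :
    downCount (toPath i b) c ≤ downCount (toPath i a) c := by
  obtain ⟨⟨x, y, hxy, rfl⟩, hlen⟩ := hab
  wlog h : x < y generalizing x y
  · exact swap_comm x y ▸ this y x hxy.symm (swap_comm x y ▸ hlen) (hxy.lt_or_gt.resolve_left h)
  rw [toPath_mul_left, swap_inv]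
  refine downCount_comp_swap_le h (fun hy => ?_) c
  simp only [toPath, decide_eq_true_eq] at hy ⊢
  exact (Fin.lt_def.1 (inv_apply_lt_inv_apply_of_invLen_lt h hlen)).trans hy

theorem downCount_toPath_anti_of_bruhatLE {v w : Perm (Fin n)} (h : bruhatLE v w) (c : ℕ) :
    downCount (toPath i w) c ≤ downCount (toPath i v) c := by
  induction h with
  | refl => exact le_rfl
  | tail _ hstep ih => exact (downCount_toPath_le_of_bruhat_step hstep c).trans ih

end Bruhat

theorem valley_not_ge_general (n i : ℕ)
    (w : Equiv.Perm (Fin n)) (hw : w ∈ minRep n i)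
    (a j b : ℕ) (hbn : b < n)
    (hdown : ∀ k (hk : k < n), a ≤ k → k ≤ j → toPath i w ⟨k, hk⟩ = true)
    (hup : ∀ k (hk : k < n), j + 1 ≤ k → k ≤ b → toPath i w ⟨k, hk⟩ = false)
    (v : Equiv.Perm (Fin n)) (hv : v ∈ minRep n i) (hvw : bruhatLE v w) (hne : v ≠ w)
    (x : Equiv.Perm (Fin n))
    (hx : x ∈ Subgroup.closure {g | ∃ m : ℕ, a ≤ m ∧ m < b ∧ g = sT n m}) :
    ∀ w' ∈ minRep n i, (∃ u ∈ WIsub n i, x * v = w' * u) → ¬ bruhatLE w w' := by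
  rintro w' - ⟨u, hu, hxv⟩ hww'
  have hout : ∀ c, c ≤ a ∨ b < c →
      downCount (toPath i w) c = downCount (toPath i v) c := by
    intro c hc
    have hxc : x⁻¹ ∈ segmentStabilizer n c := inv_mem (closure_interval_le_segmentStabilizer hc hx)
    have hw'v : toPath i w' = toPath i v ∘ ⇑x⁻¹ := by
      rw [← toPath_mul_of_mem_segmentStabilizer (WIsub_le_segmentStabilizer i hu), ← hxv,
        toPath_mul_left]
    refine le_antisymm (downCount_toPath_anti_of_bruhatLE hvw c) ?_
    calc downCount (toPath i v) c = downCount (toPath i w') c := by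
          rw [hw'v, downCount_comp_of_mem_segmentStabilizer hxc]
      _ ≤ downCount (toPath i w) c := downCount_toPath_anti_of_bruhatLE hww' c
  have heq : ∀ c, downCount (toPath i w) c = downCount (toPath i v) c := by
    intro c
    by_cases hc : c ≤ a ∨ b < c
    · exact hout c hc
    · exact downCount_eq_of_valley hbn hdown hup (downCount_toPath_anti_of_bruhatLE hvw)
        (hout a (by omega)) (hout (b + 1) (by omega)) (by omega) (by omega)
  exact hne (eq_of_toPath_eq hv hw (eq_of_downCount_eq heq).symm)

/-- if `w ∈ W^I` has a valley at `j` with maximal `↘`-run `a..j` and `↗`-run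
`j+1..b` (0-indexed entries), `v < w` in `W^I` and `x ∈ W_{[a,b-1]}`, then the minimal
representative of `x·v·W_I` is not `≥ w` in Bruhat order.
Here `true` encodes `↘`, `false` encodes `↗`. -/
theorem valley_not_ge (n i : ℕ) (hi1 : 1 ≤ i) (hi2 : i < n)
    (w : Equiv.Perm (Fin n)) (hw : w ∈ minRep n i)
    (a j b : ℕ) (hab : a ≤ j) (hjb : j < b) (hbn : b < n)
    (hdown : ∀ k (hk : k < n), a ≤ k → k ≤ j → toPath i w ⟨k, hk⟩ = true)
    (hup : ∀ k (hk : k < n), j + 1 ≤ k → k ≤ b → toPath i w ⟨k, hk⟩ = false)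
    (v : Equiv.Perm (Fin n)) (hv : v ∈ minRep n i) (hvw : bruhatLE v w) (hne : v ≠ w)
    (x : Equiv.Perm (Fin n))
    (hx : x ∈ Subgroup.closure {g | ∃ m : ℕ, a ≤ m ∧ m < b ∧ g = sT n m}) :
    ∀ w' ∈ minRep n i, (∃ u ∈ WIsub n i, x * v = w' * u) → ¬ bruhatLE w w' :=
  valley_not_ge_general n i w hw a j b hbn hdown hup v hv hvw hne x hx
end
end
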